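/- Let X and Y be 2×2 matrices over a commutative ring S such that the product XY has both diagonal entries zero. Then −det[X,Y] = det(X)·(str(Y))² + det(Y)·(str(X))², where str(M) := m₁₁ − m₂₂ is the supertrace. -/
import Mathlib

/-- The supertrace of a 2×2 matrix: `str M = M 0 0 - M 1 1`. -/
def str {S : Type*} [CommRing S] (M : Matrix (Fin 2) (Fin 2) S) : S :=
  M 0 0 - M 1 1

theorem det_commutator_of_zero_diagonal_prod {S : Type*} [CommRing S]
    (X Y : Matrix (Fin 2) (Fin 2) S)
    (h0 : (X * Y) 0 0 = 0) (h1 : (X * Y) 1 1 = 0) :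
    -(X * Y - Y * X).det = X.det * (str Y) ^ 2 + Y.det * (str X) ^ 2 := by
  simp only [Matrix.mul_apply, Fin.sum_univ_two] at h0 h1
  simp only [Matrix.det_fin_two, str, Matrix.sub_apply, Matrix.mul_apply, Fin.sum_univ_two]
  linear_combination (-(X 0 0 * Y 1 1) + X 0 1 * Y 1 0 - 2 * (X 1 0 * Y 0 1)
      - X 1 1 * Y 0 0 + X 1 1 * Y 1 1) * h0
    + (3 * (X 0 0 * Y 0 0) - X 0 0 * Y 1 1 + X 1 0 * Y 0 1 - X 1 1 * Y 0 0) * h1
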